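/- arXiv:1408.4217 — 3 statements merged into one kernel-verified Lean document; each statement's English description precedes it below -/
import Mathlib

section
/- Let G be a quasi-semi-simple group acting by isometries on a metric space X, with jointly continuous action map G × X → X. Suppose that every normal subgroup of G that has a global fixed point in X has compact closure in G. Then every G-orbit is closed in X and every point stabilizer is compact in G. -/
open Filter Topology

/-- A bundled nonempty directed index type (a "directed set"). -/
structure DirIndex : Type 1 where
  ι : Type
  [pre : Preorder ι]
  [ne : Nonempty ι]
  [dir : IsDirected ι (· ≤ ·)]

attribute [instance] DirIndex.pre DirIndex.ne DirIndex.dir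

/-- A net in `X`: a map from a nonempty directed preorder to `X`. -/
structure DirNet (X : Type*) where
  idx : DirIndex
  toFun : idx.ι → X

/-- `m` is a subnet of `n`: it is obtained by precomposing `n` with a
monotone cofinal map of directed sets. -/
def DirNet.IsSubnet {X : Type*} (m n : DirNet X) : Prop :=
  ∃ f : m.idx.ι → n.idx.ι, Monotone f ∧ (∀ d, ∃ e, d ≤ f e) ∧ m.toFun = n.toFun ∘ f

/-- Convergence of a net to a point. -/
def DirNet.TendstoNhds {X : Type*} [TopologicalSpace X] (n : DirNet X) (x : X) : Prop :=
  Filter.Tendsto n.toFun Filter.atTop (nhds x)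

/-- The net obtained from `n` by post-composition with `f`. -/
def DirNet.map {X Y : Type*} (n : DirNet X) (f : X → Y) : DirNet Y :=
  ⟨n.idx, f ∘ n.toFun⟩

/-- A net admits a convergent subnet. -/
def DirNet.HasConvergentSubnet {X : Type*} [TopologicalSpace X] (n : DirNet X) : Prop :=
  ∃ m : DirNet X, m.IsSubnet n ∧ ∃ x, m.TendstoNhds x

/-- `U₊`: the group of elements contracted by conjugation along the net `a`. -/
def UPlus {G : Type*} [Group G] [TopologicalSpace G] (a : DirNet G) : Set G :=
  {x | Filter.Tendsto (fun i => (a.toFun i)⁻¹ * x * a.toFun i) Filter.atTop (nhds 1)}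

/-- `U₋`: the group of elements contracted by the inverse conjugation along the net `a`. -/
def UMinus {G : Type*} [Group G] [TopologicalSpace G] (a : DirNet G) : Set G :=
  {x | Filter.Tendsto (fun i => a.toFun i * x * (a.toFun i)⁻¹) Filter.atTop (nhds 1)}

/-- `U₀`: the elements `x` such that every subnet of both conjugation nets admits a
convergent subnet. -/
def UZero {G : Type*} [Group G] [TopologicalSpace G] (a : DirNet G) : Set G :=
  {x | (∀ p : DirNet G, p.IsSubnet (a.map fun g => g⁻¹ * x * g) → p.HasConvergentSubnet) ∧
       (∀ p : DirNet G, p.IsSubnet (a.map fun g => g * x * g⁻¹) → p.HasConvergentSubnet)}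

/-- A (locally compact Hausdorff) topological group is quasi-semi-simple (qss) if it has
a closed subgroup `A` with `G = C·A·C` for some compact `C`, and every net in `A` going to
infinity has a subnet whose `U₊` has non-compact closure and such that `U₊ ∪ U₋ ∪ U₀`
generates a dense subgroup. -/
def IsQSS (G : Type*) [Group G] [TopologicalSpace G] : Prop :=
  ∃ A : Subgroup G, IsClosed (A : Set G) ∧
    (∃ C : Set G, IsCompact C ∧ ∀ g : G, ∃ c ∈ C, ∃ a ∈ A, ∃ c' ∈ C, g = c * a * c') ∧
    ∀ n : DirNet G, (∀ i, n.toFun i ∈ A) →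
      Filter.Tendsto n.toFun Filter.atTop (Filter.cocompact G) →
      ∃ m : DirNet G, m.IsSubnet n ∧
        ¬ IsCompact (closure (UPlus m)) ∧
        Dense ((Subgroup.closure (UPlus m ∪ UMinus m ∪ UZero m) : Subgroup G) : Set G)

/-- A topology `T` is compatible with the uniform structure `U`. -/
def SCompatible {X : Type*} (U : UniformSpace X) (T : TopologicalSpace X) : Prop :=
  ∀ V : Set X, IsOpen[T] V → ∀ y ∈ V, ∃ V' : Set X, IsOpen[T] V' ∧ y ∈ V' ∧
    ∃ W ∈ @uniformity X U, {v | ∃ v' ∈ V', (v, v') ∈ W} ⊆ V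

/-- The action of `G` on the uniform space `(X, U)` is equicontinuous. -/
def EquicontinuousSMul (G : Type*) {X : Type*} [SMul G X] (U : UniformSpace X) : Prop :=
  ∀ W ∈ @uniformity X U, {p : X × X | ∀ g : G, (g • p.1, g • p.2) ∈ W} ∈ @uniformity X U

/-- Joint continuity of the action map with respect to given topologies. -/
def JointlyContinuousSMul (G : Type*) {X : Type*} [SMul G X] (tG : TopologicalSpace G)
    (tX : TopologicalSpace X) : Prop :=
  @Continuous (G × X) X (@instTopologicalSpaceProd G X tG tX) tX fun p => p.1 • p.2

/-- A map is universally closed: its product with any identity map is closed. -/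
def UniversallyClosedMap {X Y : Type*} (tX : TopologicalSpace X) (tY : TopologicalSpace Y)
    (f : X → Y) : Prop :=
  ∀ (Z : Type) (tZ : TopologicalSpace Z),
    @IsClosedMap (X × Z) (Y × Z) (@instTopologicalSpaceProd X Z tX tZ)
      (@instTopologicalSpaceProd Y Z tY tZ) (Prod.map f id)

/-!
Both claims come down to one fact: if `g n → ∞` in `G`, then `g n • x` does not converge.
Indeed, a point of the closure of an orbit is a limit of `g n • x`, where `(g n)` either clusters
at some `g₀` (and the limit is `g₀ • x`) or tends to infinity; and a non-compact stabilizer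
contains a sequence tending to infinity.

For the fact, write `g n = c n * a n * c' n` with `a n ∈ A` and `c n, c' n ∈ C`. After passing to
a subsequence, `a n` maps points `p n → x'` to points `q n → y'`, so by isometry the elements
`(a m)⁻¹ * a n` and their inverses move `x'` very little when `m` and `n` are large, while they
tend to infinity when `n ≫ m`. Take the subnet supplied by the qss property and an ultrafilter
finer than its tail filter. The elements contracted by conjugation along the ultrafilter (for the
net and for its inverse) fix `x'`, and so does the closed subgroup `L` they generate. Elements of
`U₊`, `U₋` lie in `L`, and elements of `U₀` have convergent conjugates along the ultrafilter, so
they normalise `L`. Hence `L` is normalised by a dense subgroup, so it is normal. By hypothesis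
`L` has compact closure, but `L` contains `U₊`, whose closure is not compact.
-/

open Set Pointwise

instance Filter.curry_neBot {α β : Type*} {l : Filter α} {m : Filter β} [l.NeBot] [m.NeBot] :
    (l.curry m).NeBot :=
  forall_mem_nonempty_iff_neBot.1 fun _ hs => by
    obtain ⟨a, ha⟩ := (mem_curry_iff.1 hs).exists
    obtain ⟨b, hb⟩ := ha.exists
    exact ⟨(a, b), hb⟩

theorem DirNet.IsSubnet.tendsto {X : Type*} {m n : DirNet X} (h : m.IsSubnet n) :
    Tendsto m.toFun atTop (Filter.map n.toFun atTop) := by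
  obtain ⟨f, hf_mono, hf_cofinal, hmf⟩ := h
  rw [hmf]
  exact tendsto_map.comp (tendsto_atTop_atTop_of_monotone hf_mono hf_cofinal)

/-- Pairs `(i, s)` with `i ∈ s ∈ F`, where `(i, s) ≤ (j, t)` means `t ⊆ s` and `i ≤ j`. -/
structure FilterIdx {ι : Type} [Preorder ι] (F : Filter ι) : Type where
  pt : ι
  set : Set ι
  pt_mem : pt ∈ set
  set_mem : set ∈ F

namespace FilterIdx

variable {ι : Type} [Preorder ι] {F : Filter ι}

instance : Preorder (FilterIdx F) :=
  Preorder.lift fun p => (OrderDual.toDual p.set, p.pt)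

instance [F.NeBot] : Nonempty (FilterIdx F) :=
  let ⟨i, hi⟩ := F.nonempty_of_mem univ_mem
  ⟨⟨i, univ, hi, univ_mem⟩⟩

theorem isDirected [F.NeBot] (hF : F ≤ atTop) : IsDirected (FilterIdx F) (· ≤ ·) := by
  refine ⟨fun ⟨i, s, _, hs⟩ ⟨j, t, _, ht⟩ => ?_⟩
  have hmem : s ∩ t ∩ (Ici i ∩ Ici j) ∈ F :=
    inter_mem (inter_mem hs ht) (hF (inter_mem (Ici_mem_atTop i) (Ici_mem_atTop j)))
  obtain ⟨k, hk⟩ := F.nonempty_of_mem hmem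
  exact ⟨⟨k, _, hk, hmem⟩, ⟨fun _ h => h.1.1, hk.2.1⟩, ⟨fun _ h => h.1.2, hk.2.2⟩⟩

theorem tendsto_pt [F.NeBot] : Tendsto (pt : FilterIdx F → ι) atTop F := by
  intro s hs
  rw [mem_map]
  refine mem_of_superset (mem_atTop (⟨_, s, (F.nonempty_of_mem hs).some_mem, hs⟩ : FilterIdx F)) ?_
  rintro p ⟨hps, -⟩
  exact (show p.set ⊆ s from hps) p.pt_mem

end FilterIdx

namespace DirNet

variable {X : Type*}

def restrict (n : DirNet X) (F : Filter n.idx.ι) [F.NeBot] (hF : F ≤ atTop) : DirNet X where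
  idx := @DirIndex.mk (FilterIdx F) _ _ (FilterIdx.isDirected hF)
  toFun p := n.toFun p.pt

variable (n : DirNet X) (F : Filter n.idx.ι) [F.NeBot] (hF : F ≤ atTop)

theorem restrict_isSubnet : (n.restrict F hF).IsSubnet n :=
  ⟨FilterIdx.pt, fun _ _ h => h.2, fun d => ⟨⟨d, Ici d, le_rfl, hF (Ici_mem_atTop d)⟩, le_rfl⟩,
    rfl⟩

theorem tendsto_restrict : Tendsto (n.restrict F hF).toFun atTop (Filter.map n.toFun F) :=
  tendsto_map.comp FilterIdx.tendsto_pt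

theorem exists_tendsto_ultrafilter [TopologicalSpace X]
    (hn : ∀ p : DirNet X, p.IsSubnet n → p.HasConvergentSubnet) (V : Ultrafilter n.idx.ι)
    (hV : (V : Filter n.idx.ι) ≤ atTop) : ∃ x, Tendsto n.toFun V (𝓝 x) := by
  obtain ⟨r, hr, x, hx⟩ := hn _ (n.restrict_isSubnet V hV)
  refine ⟨x, (Ultrafilter.map n.toFun V).clusterPt_iff.mp ?_⟩
  exact (tendsto_inf.2 ⟨hx, (IsSubnet.tendsto hr).mono_right (n.tendsto_restrict _ hV)⟩).neBot

end DirNet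

theorem MulAction.isClosed_stabilizer {M X : Type*} [Group M] [TopologicalSpace M]
    [TopologicalSpace X] [T2Space X] [MulAction M X] [ContinuousSMul M X] (x : X) :
    IsClosed (stabilizer M x : Set M) :=
  isClosed_eq (continuous_id.smul continuous_const) continuous_const

section TopologicalGroup

variable {G : Type*} [Group G] [TopologicalSpace G] [IsTopologicalGroup G]

theorem Subgroup.isClosed_normalizer {H : Subgroup G} (hH : IsClosed (H : Set G)) :
    IsClosed (normalizer (H : Set G) : Set G) := by
  have : (normalizer (H : Set G) : Set G) =
      ⋂ h ∈ H, {g | g * h * g⁻¹ ∈ H ∧ g⁻¹ * h * g ∈ H} := by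
    ext g
    simp only [SetLike.mem_coe, mem_iInter₂, mem_ofPred_eq]
    refine ⟨fun hg h hh => ⟨(mem_normalizer_iff.1 hg h).1 hh, (mem_normalizer_iff''.1 hg h).1 hh⟩,
      fun hg => mem_normalizer_iff.2 fun h => ⟨fun hh => (hg h hh).1, fun hh => ?_⟩⟩
    simpa [mul_assoc] using (hg _ hh).2
  rw [this]
  exact isClosed_biInter fun h _ => (hH.preimage (by fun_prop)).inter (hH.preimage (by fun_prop))

theorem Subgroup.conj_mem_topologicalClosure_closure {S : Set G} {g : G}
    (hS : ∀ s ∈ S, g * s * g⁻¹ ∈ S) {h : G} (hh : h ∈ (closure S).topologicalClosure) :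
    g * h * g⁻¹ ∈ (closure S).topologicalClosure := by
  have hmaps : MapsTo (fun h => g * h * g⁻¹) (closure S : Set G) (closure S) := fun h hh => by
    have := mem_map_of_mem (MulAut.conj g).toMonoidHom hh
    rw [MonoidHom.map_closure] at this
    exact closure_mono (image_subset_iff.2 hS) this
  exact map_mem_closure (f := fun h => g * h * g⁻¹) (by fun_prop) hh hmaps

theorem tendsto_cocompact_of_mul_mul {ι : Type*} {l : Filter ι} {C : Set G} (hC : IsCompact C)
    {c a c' : ι → G} (hc : ∀ i, c i ∈ C) (hc' : ∀ i, c' i ∈ C)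
    (h : Tendsto (fun i => c i * a i * c' i) l (cocompact G)) : Tendsto a l (cocompact G) := by
  rw [hasBasis_cocompact.tendsto_right_iff] at h ⊢
  intro K hK
  filter_upwards [h _ ((hC.mul hK).mul hC)] with i hi hai
  exact hi (mul_mem_mul (mul_mem_mul (hc i) hai) (hc' i))

/-- Two terms in one translate of `K₀` differ by an element of `K₀⁻¹ * K₀`, so a compact set,
being covered by finitely many such translates, contains only finitely many terms. -/
theorem tendsto_cocompact_of_inv_mul_notMem {K₀ : Set G} (hK₀ : (interior K₀).Nonempty)
    {g : ℕ → G} (hg : ∀ m n, m < n → (g m)⁻¹ * g n ∉ K₀⁻¹ * K₀) :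
    Tendsto g atTop (cocompact G) := by
  rw [← Nat.cofinite_eq_atTop, tendsto_cofinite_cocompact_iff]
  intro K hK
  obtain ⟨t, ht⟩ := compact_covered_by_mul_left_translates hK hK₀
  have hdiff : ∀ s m n, s * g m ∈ K₀ → s * g n ∈ K₀ → (g m)⁻¹ * g n ∈ K₀⁻¹ * K₀ :=
    fun s m n hm hn => mem_mul.2 ⟨_, inv_mem_inv.2 hm, _, hn, by group⟩
  have hsub : ∀ s, {n | s * g n ∈ K₀}.Subsingleton := by
    intro s m hm n hn
    rcases lt_trichotomy m n with hmn | rfl | hnm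
    exacts [(hg m n hmn (hdiff s m n hm hn)).elim, rfl, (hg n m hnm (hdiff s n m hn hm)).elim]
  refine (t.finite_toSet.biUnion fun s _ => (hsub s).finite).subset fun n hn => ?_
  simpa using ht hn

theorem exists_seq_mem_tendsto_cocompact [LocallyCompactSpace G] {S : Set G} (hS : IsClosed S)
    (hS' : ¬ IsCompact S) : ∃ g : ℕ → G, (∀ n, g n ∈ S) ∧ Tendsto g atTop (cocompact G) := by
  obtain ⟨K₀, hK₀, hK₀1⟩ := exists_compact_mem_nhds (1 : G)
  have hQ : IsCompact (K₀⁻¹ * K₀) := hK₀.inv.mul hK₀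
  obtain ⟨g, hgS, hg⟩ := exists_seq_of_forall_finset_exists (· ∈ S)
    (fun a b => a⁻¹ * b ∉ K₀⁻¹ * K₀) fun s _ => by
      by_contra! h
      have hcover : IsCompact (⋃ a ∈ s, (a * ·) '' (K₀⁻¹ * K₀)) :=
        s.isCompact_biUnion fun a _ => hQ.image (continuous_const_mul a)
      refine hS' (hcover.of_isClosed_subset hS fun y hy => ?_)
      obtain ⟨a, ha, hay⟩ := h y hy
      exact mem_iUnion₂.2 ⟨a, ha, _, hay, mul_inv_cancel_left a y⟩
  exact ⟨g, hgS, tendsto_cocompact_of_inv_mul_notMem ⟨1, mem_interior_iff_mem_nhds.2 hK₀1⟩ hg⟩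

end TopologicalGroup

theorem dist_inv_mul_smul_le {G X : Type*} [Group G] [PseudoMetricSpace X] [MulAction G X]
    [IsIsometricSMul G X] {a a' : G} {p q p' q' : X} (h : a • p = q) (h' : a' • p' = q')
    (x y : X) : dist ((a⁻¹ * a') • x) x ≤ dist p x + dist q y + (dist p' x + dist q' y) :=
  calc dist ((a⁻¹ * a') • x) x
      = dist (a' • x) (a • x) := by rw [← dist_smul a, smul_smul, mul_inv_cancel_left]
    _ ≤ dist (a' • x) q' + dist q' y + dist y (a • x) := dist_triangle4 _ _ _ _
    _ ≤ dist (a' • x) q' + dist q' y + (dist y q + dist q (a • x)) := by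
        gcongr; exact dist_triangle _ _ _
    _ = dist p x + dist q y + (dist p' x + dist q' y) := by
        rw [← h, ← h', dist_smul, dist_smul, dist_comm x, dist_comm y]; ring

section Contraction

variable {ι G : Type*} [Group G] [TopologicalSpace G] [IsTopologicalGroup G]

def conjConvergentSubgroup (l : Filter ι) (b : ι → G) : Subgroup G where
  carrier := {v | ∃ t, Tendsto (fun i => (b i)⁻¹ * v * b i) l (𝓝 t)}
  one_mem' := ⟨1, tendsto_const_nhds.congr fun i => by group⟩
  mul_mem' := fun ⟨s, hs⟩ ⟨t, ht⟩ => ⟨s * t, (hs.mul ht).congr fun i => by group⟩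
  inv_mem' := fun ⟨t, ht⟩ => ⟨t⁻¹, ht.inv.congr fun i => by group⟩

def contractionSubgroup (l : Filter ι) (b : ι → G) : Subgroup G where
  carrier := {v | Tendsto (fun i => (b i)⁻¹ * v * b i) l (𝓝 1)}
  one_mem' := tendsto_const_nhds.congr fun i => by group
  mul_mem' hv hw := by
    change Tendsto _ _ _
    simpa only [mul_one] using (hv.mul hw).congr fun i => by group
  inv_mem' hv := by
    change Tendsto _ _ _
    simpa only [inv_one] using hv.inv.congr fun i => by group

variable {l : Filter ι} {b : ι → G}

theorem conj_mem_contractionSubgroup {u v : G} (hu : u ∈ conjConvergentSubgroup l b)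
    (hv : v ∈ contractionSubgroup l b) : u * v * u⁻¹ ∈ contractionSubgroup l b := by
  obtain ⟨t, ht⟩ := hu
  change Tendsto _ _ _
  simpa only [mul_one, mul_inv_cancel] using ((ht.mul hv).mul ht.inv).congr fun i => by group

/-- `v` moves `b i • x`, which is close to `x`, as much as the conjugate `(b i)⁻¹ * v * b i`,
which is close to `1`, moves `x`. -/
theorem smul_eq_of_mem_contractionSubgroup {X : Type*} [MetricSpace X] [MulAction G X]
    [IsIsometricSMul G X] [ContinuousSMul G X] [l.NeBot] {x : X}
    (hb : Tendsto (fun i => b i • x) l (𝓝 x)) {v : G} (hv : v ∈ contractionSubgroup l b) :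
    v • x = x := by
  have hconj : Tendsto (fun i => ((b i)⁻¹ * v * b i) • x) l (𝓝 x) := by
    simpa only [one_smul] using hv.smul_const x
  have hle : ∀ i, dist (v • x) x ≤
      dist (b i • x) x + dist (((b i)⁻¹ * v * b i) • x) x + dist (b i • x) x := fun i => by
    have hmid : dist (v • b i • x) (b i • x) = dist (((b i)⁻¹ * v * b i) • x) x := by
      rw [← dist_smul (b i) (((b i)⁻¹ * v * b i) • x), smul_smul, smul_smul,
        show b i * ((b i)⁻¹ * v * b i) = v * b i by group]
    calc dist (v • x) x
        ≤ dist (v • x) (v • b i • x) + dist (v • b i • x) (b i • x) + dist (b i • x) x :=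
          dist_triangle4 _ _ _ _
      _ = _ := by rw [dist_smul, dist_comm, hmid]
  have hlim : Tendsto (fun i =>
      dist (b i • x) x + dist (((b i)⁻¹ * v * b i) • x) x + dist (b i • x) x) l (𝓝 0) := by
    have hb₀ := tendsto_iff_dist_tendsto_zero.1 hb
    simpa using (hb₀.add (tendsto_iff_dist_tendsto_zero.1 hconj)).add hb₀
  exact dist_le_zero.1 (ge_of_tendsto' hlim hle)

def contractionClosure (l : Filter ι) (b : ι → G) : Subgroup G :=
  (Subgroup.closure
    (contractionSubgroup l b ∪ contractionSubgroup l b⁻¹ : Set G)).topologicalClosure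

theorem contractionClosure_le_stabilizer {X : Type*} [MetricSpace X] [MulAction G X]
    [IsIsometricSMul G X] [ContinuousSMul G X] [l.NeBot] {x : X}
    (hb : Tendsto (fun i => b i • x) l (𝓝 x)) (hb' : Tendsto (fun i => (b i)⁻¹ • x) l (𝓝 x)) :
    contractionClosure l b ≤ MulAction.stabilizer G x := by
  refine Subgroup.topologicalClosure_minimal _ ((Subgroup.closure_le _).2 ?_)
    (MulAction.isClosed_stabilizer x)
  rintro v (hv | hv)
  exacts [smul_eq_of_mem_contractionSubgroup hb hv, smul_eq_of_mem_contractionSubgroup hb' hv]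

theorem conjConvergentSubgroup_inf_le_normalizer :
    conjConvergentSubgroup l b ⊓ conjConvergentSubgroup l b⁻¹ ≤
      Subgroup.normalizer (contractionClosure l b : Set G) := by
  have hconj : ∀ w ∈ conjConvergentSubgroup l b ⊓ conjConvergentSubgroup l b⁻¹,
      ∀ h ∈ contractionClosure l b, w * h * w⁻¹ ∈ contractionClosure l b := by
    refine fun w hw h hh => Subgroup.conj_mem_topologicalClosure_closure ?_ hh
    rintro v (hv | hv)
    exacts [Or.inl (conj_mem_contractionSubgroup hw.1 hv),
      Or.inr (conj_mem_contractionSubgroup hw.2 hv)]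
  refine fun u hu => Subgroup.mem_normalizer_iff.2 fun h => ⟨hconj u hu h, fun hh => ?_⟩
  simpa [mul_assoc] using hconj u⁻¹ (inv_mem hu) _ hh

end Contraction

def FixingNormalSubgroupsRelCompact (G X : Type*) [Group G] [TopologicalSpace G]
    [MulAction G X] : Prop :=
  ∀ N : Subgroup G, N.Normal → (∃ x : X, ∀ g ∈ N, g • x = x) → IsCompact (closure (N : Set G))

section QSS

variable {G X : Type*} [Group G] [TopologicalSpace G] [IsTopologicalGroup G]
  [MetricSpace X] [MulAction G X] [IsIsometricSMul G X] [ContinuousSMul G X]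

theorem isCompact_closure_uPlus (hfix : FixingNormalSubgroupsRelCompact G X) {m : DirNet G}
    (hdense : Dense ((Subgroup.closure (UPlus m ∪ UMinus m ∪ UZero m) : Subgroup G) : Set G))
    {x : X} (hm : Tendsto (fun i => m.toFun i • x) atTop (𝓝 x))
    (hm' : Tendsto (fun i => (m.toFun i)⁻¹ • x) atTop (𝓝 x)) :
    IsCompact (closure (UPlus m)) := by
  obtain ⟨V, hV⟩ := exists_ultrafilter_le (atTop : Filter m.idx.ι)
  set L := contractionClosure (V : Filter m.idx.ι) m.toFun
  have hLx : ∀ g ∈ L, g • x = x := fun g hg =>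
    contractionClosure_le_stabilizer (hm.mono_left hV) (hm'.mono_left hV) hg
  have hUPlus : UPlus m ⊆ L := fun u hu =>
    Subgroup.le_topologicalClosure _ (Subgroup.subset_closure (Or.inl (hu.mono_left hV)))
  have hgen : UPlus m ∪ UMinus m ∪ UZero m ⊆ Subgroup.normalizer (L : Set G) := by
    rintro u ((hu | hu) | hu)
    · exact Subgroup.le_normalizer (hUPlus hu)
    · refine Subgroup.le_normalizer (Subgroup.le_topologicalClosure _
        (Subgroup.subset_closure (Or.inr ?_)))
      exact (hu.mono_left hV).congr fun i => by simp
    · obtain ⟨t, ht⟩ := (m.map _).exists_tendsto_ultrafilter hu.1 V hV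
      obtain ⟨t', ht'⟩ := (m.map _).exists_tendsto_ultrafilter hu.2 V hV
      exact conjConvergentSubgroup_inf_le_normalizer
        ⟨⟨t, ht⟩, ⟨t', ht'.congr fun i => by simp [DirNet.map]⟩⟩
  have hL : L.Normal := by
    refine Subgroup.normalizer_eq_top_iff.1 (eq_top_iff.2 fun g _ => ?_)
    exact closure_minimal ((Subgroup.closure_le _).2 hgen)
      (Subgroup.isClosed_normalizer (Subgroup.isClosed_topologicalClosure _)) (hdense g)
  exact (hfix L hL ⟨x, hLx⟩).of_isClosed_subset isClosed_closure (closure_mono hUPlus)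

theorem not_tendsto_cocompact_of_smul_eq {A : Subgroup G}
    (hA : ∀ n : DirNet G, (∀ i, n.toFun i ∈ A) → Tendsto n.toFun atTop (cocompact G) →
      ∃ m : DirNet G, m.IsSubnet n ∧ ¬ IsCompact (closure (UPlus m)) ∧
        Dense ((Subgroup.closure (UPlus m ∪ UMinus m ∪ UZero m) : Subgroup G) : Set G))
    (hfix : FixingNormalSubgroupsRelCompact G X)
    {α : ℕ → G} (hαA : ∀ n, α n ∈ A) {p q : ℕ → X} {x y : X}
    (hp : Tendsto p atTop (𝓝 x)) (hq : Tendsto q atTop (𝓝 y)) (hpq : ∀ n, α n • p n = q n) :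
    ¬ Tendsto α atTop (cocompact G) := by
  intro hα
  let β : ℕ × ℕ → G := fun k => (α k.1)⁻¹ * α k.2
  let W : Filter (ℕ × ℕ) := (atTop : Filter ℕ).curry (atTop : Filter ℕ)
  have hW : W ≤ atTop := curry_le_prod.trans (prod_atTop_atTop_eq (α := ℕ) (β := ℕ)).le
  have hβ : Tendsto β W (cocompact G) :=
    Tendsto.curry (f := fun m n => (α m)⁻¹ * α n) (Eventually.of_forall fun k =>
      (tendsto_cocompact_mul_left (mul_inv_cancel (α k))).comp hα)
  have hε : Tendsto (fun k : ℕ × ℕ => dist (p k.1) x + dist (q k.1) y +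
      (dist (p k.2) x + dist (q k.2) y)) W (𝓝 0) := by
    have h := (tendsto_iff_dist_tendsto_zero.1 hp).add (tendsto_iff_dist_tendsto_zero.1 hq)
    simpa using ((h.comp tendsto_fst).add (h.comp tendsto_snd)).mono_left curry_le_prod
  have hβx : Tendsto (fun k => β k • x) W (𝓝 x) :=
    tendsto_iff_dist_tendsto_zero.2 <| squeeze_zero (fun _ => dist_nonneg)
      (fun k => dist_inv_mul_smul_le (hpq k.1) (hpq k.2) x y) hε
  have hβx' : Tendsto (fun k => (β k)⁻¹ • x) W (𝓝 x) := by
    refine tendsto_iff_dist_tendsto_zero.2 <| squeeze_zero (fun _ => dist_nonneg) (fun k => ?_) hε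
    rw [add_comm (dist (p k.1) x + _)]
    simpa [β, mul_inv_rev] using dist_inv_mul_smul_le (hpq k.2) (hpq k.1) x y
  let n₀ : DirNet G := ⟨{ ι := ℕ × ℕ }, β⟩
  let n := n₀.restrict W hW
  have hnβ : Tendsto n.toFun atTop (map β W) := n₀.tendsto_restrict W hW
  have hnA : ∀ i, n.toFun i ∈ A := fun i => A.mul_mem (A.inv_mem (hαA _)) (hαA _)
  obtain ⟨m, hmn, hnc, hdense⟩ := hA n hnA (hnβ.trans hβ)
  have hmβ : Tendsto m.toFun atTop (map β W) := hmn.tendsto.mono_right hnβ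
  exact hnc (isCompact_closure_uPlus hfix hdense
    ((tendsto_map'_iff (f := fun g : G => g • x)).2 hβx |>.comp hmβ)
    ((tendsto_map'_iff (f := fun g : G => g⁻¹ • x)).2 hβx' |>.comp hmβ))

theorem IsQSS.not_tendsto_smul_of_tendsto_cocompact (hqss : IsQSS G)
    (hfix : FixingNormalSubgroupsRelCompact G X) {g : ℕ → G} (hg : Tendsto g atTop (cocompact G))
    (x y : X) : ¬ Tendsto (fun n => g n • x) atTop (𝓝 y) := by
  intro hgy
  obtain ⟨A, -, ⟨C, hC, hCAC⟩, hA⟩ := hqss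
  choose c hc a ha c' hc' hg_eq using fun n => hCAC (g n)
  have ha_lim : Tendsto a atTop (cocompact G) :=
    tendsto_cocompact_of_mul_mul hC hc hc' (hg.congr hg_eq)
  have hK : IsCompact (((· • x) '' C) ×ˢ
      ((fun z : G × X => z.1 • z.2) '' (C⁻¹ ×ˢ insert y (range fun n => g n • x)))) :=
    (hC.image (continuous_id.smul continuous_const)).prod
      ((hC.inv.prod hgy.isCompact_insert_range).image continuous_smul)
  obtain ⟨_, -, φ, hφ, hlim⟩ := hK.tendsto_subseq (x := fun n => (c' n • x, (c n)⁻¹ • g n • x))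
    fun n => ⟨⟨c' n, hc' n, rfl⟩, ⟨((c n)⁻¹, g n • x),
      ⟨inv_mem_inv.2 (hc n), mem_insert_of_mem _ ⟨n, rfl⟩⟩, rfl⟩⟩
  refine not_tendsto_cocompact_of_smul_eq hA hfix (fun n => ha (φ n)) hlim.fst_nhds hlim.snd_nhds
    (fun n => ?_) (ha_lim.comp hφ.tendsto_atTop)
  simp only [Function.comp_apply, hg_eq, smul_smul]
  group

theorem IsQSS.isClosed_orbit (hqss : IsQSS G) (hfix : FixingNormalSubgroupsRelCompact G X)
    (x : X) : IsClosed (MulAction.orbit G x) := by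
  refine isClosed_of_closure_subset fun y hy => ?_
  obtain ⟨u, hu, huy⟩ := mem_closure_iff_seq_limit.1 hy
  choose g hg using hu
  have hgy : Tendsto (fun n => g n • x) atTop (𝓝 y) := by simpa only [hg] using huy
  obtain ⟨K, hK, hfreq⟩ : ∃ K, IsCompact K ∧ ∃ᶠ n in atTop, g n ∈ K := by
    by_contra! h
    exact hqss.not_tendsto_smul_of_tendsto_cocompact hfix
      (hasBasis_cocompact.tendsto_right_iff.2 h) x y hgy
  obtain ⟨g₀, -, hg₀⟩ := hK.exists_mapClusterPt_of_frequently hfreq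
  have hcl : ClusterPt (g₀ • x) (map (fun n => g n • x) atTop) :=
    hg₀.continuousAt_comp (f := (· • x)) (continuous_id.smul continuous_const).continuousAt
  exact ⟨g₀, eq_of_nhds_neBot (hcl.mono hgy)⟩

theorem IsQSS.isCompact_stabilizer [LocallyCompactSpace G] (hqss : IsQSS G)
    (hfix : FixingNormalSubgroupsRelCompact G X) (x : X) :
    IsCompact (MulAction.stabilizer G x : Set G) := by
  by_contra h
  obtain ⟨g, hg, hg_lim⟩ := exists_seq_mem_tendsto_cocompact (MulAction.isClosed_stabilizer x) h
  exact hqss.not_tendsto_smul_of_tendsto_cocompact hfix hg_lim x x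
    (tendsto_const_nhds.congr fun n => (hg n).symm)

end QSS

theorem statement5_general {G X : Type*} [Group G] [TopologicalSpace G] [IsTopologicalGroup G]
    [LocallyCompactSpace G] [MetricSpace X] [MulAction G X]
    (hqss : IsQSS G)
    (hiso : ∀ (g : G) (x y : X), dist (g • x) (g • y) = dist x y)
    (hcont : Continuous fun p : G × X => p.1 • p.2)
    (hfix : ∀ N : Subgroup G, N.Normal → (∃ x : X, ∀ g ∈ N, g • x = x) →
      IsCompact (closure (N : Set G))) :
    (∀ x : X, IsClosed (MulAction.orbit G x)) ∧
    (∀ x : X, IsCompact (MulAction.stabilizer G x : Set G)) := by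
  have : IsIsometricSMul G X := ⟨fun g => Isometry.of_dist_eq (hiso g)⟩
  have : ContinuousSMul G X := ⟨hcont⟩
  exact ⟨hqss.isClosed_orbit hfix, hqss.isCompact_stabilizer hfix⟩

/-- A qss group acting by isometries and jointly continuously on a metric
space, such that every normal subgroup with a global fixed point has compact closure, has
closed orbits and compact point stabilizers. -/
theorem statement5 {G X : Type*} [Group G] [TopologicalSpace G] [IsTopologicalGroup G]
    [LocallyCompactSpace G] [T2Space G] [MetricSpace X] [MulAction G X]
    (hqss : IsQSS G)
    (hiso : ∀ (g : G) (x y : X), dist (g • x) (g • y) = dist x y)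
    (hcont : Continuous fun p : G × X => p.1 • p.2)
    (hfix : ∀ N : Subgroup G, N.Normal → (∃ x : X, ∀ g ∈ N, g • x = x) →
      IsCompact (closure (N : Set G))) :
    (∀ x : X, IsClosed (MulAction.orbit G x)) ∧
    (∀ x : X, IsCompact (MulAction.stabilizer G x : Set G)) :=
  statement5_general hqss hiso hcont hfix
end

section
/- Let the group G = SL₂(ℝ) act on a metric space X by isometries, with jointly continuous action map G × X → X. Then for every point x₀ ∈ X, either x₀ is a global fixed point (g·x₀ = x₀ for all g ∈ G) or its stabilizer {g ∈ G : g·x₀ = x₀} is compact. -/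
/-!
Let `H` be the stabilizer of `x₀`. The displacement `g ↦ dist (g • x₀) x₀` is continuous,
vanishes exactly on `H` and is invariant under multiplication by `H` on either side; hence if
`gₙ → g` and `aₙ * gₙ * bₙ → 1` with `aₙ, bₙ ∈ H`, then `g ∈ H`.

If `H` is not compact it contains `hₙ` with `‖hₙ‖ → ∞` and `hₙ / ‖hₙ‖ → P ≠ 0`. Conjugating the
unipotent `1 + s N` by `hₙ` with `s = t / ‖hₙ‖²` gives elements tending to `1 + t P N adj P`,
so `H` contains a one-parameter unipotent group; after conjugation, the upper triangular one.
The same principle then puts the positive diagonal group into `H` (for `ε ≠ 0`, upper unipotents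
on both sides turn `!![eˢ, 0; ε, e⁻ˢ]` into `!![1, 0; ε, 1]`), and since the diagonal group
contracts lower unipotents to `1`, it puts them into `H` as well. Upper and lower unipotents
generate `SL(2, ℝ)`.
-/

open Filter Topology Matrix

/-- The standard topology on `SL₂(ℝ)`, induced from the space of `2 × 2` real matrices. -/
instance : TopologicalSpace (Matrix.SpecialLinearGroup (Fin 2) ℝ) :=
  TopologicalSpace.induced
    (fun g : Matrix.SpecialLinearGroup (Fin 2) ℝ => (g : Matrix (Fin 2) (Fin 2) ℝ))
    inferInstance

open MulAction
open scoped MatrixGroups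

-- Mathlib's instance is stated for its own, definitionally equal, topology on `SL(2, ℝ)`.
instance : IsTopologicalGroup SL(2, ℝ) := SpecialLinearGroup.topologicalGroup

section Isometric

variable {G X ι : Type*} [Group G] [TopologicalSpace G] [MetricSpace X] [MulAction G X]
  [ContinuousSMul G X] [IsIsometricSMul G X] {x : X}

theorem mem_stabilizer_of_tendsto {l : Filter ι} [l.NeBot] {g a b : ι → G} {g₀ : G}
    (ha : ∀ i, a i ∈ stabilizer G x) (hb : ∀ i, b i ∈ stabilizer G x)
    (hg : Tendsto g l (𝓝 g₀)) (hagb : Tendsto (fun i => a i * g i * b i) l (𝓝 1)) :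
    g₀ ∈ stabilizer G x := by
  have hdist : ∀ i, dist ((a i * g i * b i) • x) x = dist (g i • x) x := fun i =>
    calc dist ((a i * g i * b i) • x) x = dist (a i • g i • x) (a i • x) := by
          rw [mul_smul, mul_smul, mem_stabilizer_iff.1 (hb i), mem_stabilizer_iff.1 (ha i)]
      _ = dist (g i • x) x := dist_smul _ _ _
  have hlim : Tendsto (fun i => dist (g i • x) x) l (𝓝 (dist (g₀ • x) x)) :=
    (hg.smul_const x).dist tendsto_const_nhds
  have hzero : Tendsto (fun i => dist (g i • x) x) l (𝓝 0) := by
    simpa only [hdist, one_smul, dist_self] using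
      (hagb.smul_const x).dist (tendsto_const_nhds (x := x))
  exact mem_stabilizer_iff.2 (dist_eq_zero.1 (tendsto_nhds_unique hlim hzero))

end Isometric

theorem exists_tendsto_smul_ne_zero_of_not_isBounded {E : Type*} [NormedAddCommGroup E]
    [NormedSpace ℝ E] [ProperSpace E] {S : Set E} (hS : ¬Bornology.IsBounded S) :
    ∃ (x : ℕ → E) (r : ℕ → ℝ) (P : E), (∀ n, x n ∈ S) ∧ Tendsto r atTop (𝓝 0) ∧
      Tendsto (fun n => r n • x n) atTop (𝓝 P) ∧ P ≠ 0 := by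
  have hlarge : ∀ n : ℕ, ∃ x ∈ S, (n : ℝ) < ‖x‖ := by
    by_contra! h
    obtain ⟨n, hn⟩ := h
    exact hS (isBounded_iff_forall_norm_le.2 ⟨n, hn⟩)
  choose x hxS hx using hlarge
  have hnorm : Tendsto (fun n => ‖x n‖) atTop atTop :=
    tendsto_atTop_mono (fun n => (hx n).le) tendsto_natCast_atTop_atTop
  have hsphere : ∀ n, ‖x n‖⁻¹ • x n ∈ Metric.sphere (0 : E) 1 := fun n => by
    have : x n ≠ 0 := norm_pos_iff.1 ((Nat.cast_nonneg n).trans_lt (hx n))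
    simpa using norm_smul_inv_norm (𝕜 := ℝ) this
  obtain ⟨P, hP, φ, hφ, hlim⟩ := (isCompact_sphere (0 : E) 1).tendsto_subseq hsphere
  refine ⟨x ∘ φ, fun n => ‖x (φ n)‖⁻¹, P, fun n => hxS _, ?_, hlim, ?_⟩
  · exact tendsto_inv_atTop_zero.comp (hnorm.comp hφ.tendsto_atTop)
  · exact Metric.ne_of_mem_sphere hP one_ne_zero

namespace SL2Real

open Real

/-- The square-zero matrix `v ⊗ (-v 1, v 0)`, whose kernel and image are both `ℝ ∙ v`. -/
def nilpotent (v : Fin 2 → ℝ) : Matrix (Fin 2) (Fin 2) ℝ :=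
  !![-(v 0 * v 1), v 0 ^ 2; -(v 1 ^ 2), v 0 * v 1]

def unipotent (v : Fin 2 → ℝ) (t : ℝ) : SL(2, ℝ) :=
  ⟨1 + t • nilpotent v, by simp [det_fin_two, nilpotent]; ring⟩

def upper (t : ℝ) : SL(2, ℝ) := ⟨!![1, t; 0, 1], by simp [det_fin_two]⟩

def lower (t : ℝ) : SL(2, ℝ) := ⟨!![1, 0; t, 1], by simp [det_fin_two]⟩

noncomputable def diagExp (s : ℝ) : SL(2, ℝ) :=
  ⟨!![exp s, 0; 0, exp (-s)], by simp [det_fin_two, ← exp_add]⟩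

theorem continuous_unipotent : Continuous fun p : (Fin 2 → ℝ) × ℝ => unipotent p.1 p.2 := by
  refine Continuous.subtype_mk ?_ _
  unfold nilpotent
  fun_prop

theorem continuous_lower : Continuous lower :=
  Continuous.subtype_mk (by fun_prop) _

theorem unipotent_zero_left (t : ℝ) : unipotent 0 t = 1 := by
  ext i j; fin_cases i <;> fin_cases j <;> simp [unipotent, nilpotent]

theorem lower_zero : lower 0 = 1 := by
  ext i j; fin_cases i <;> fin_cases j <;> simp [lower]

theorem unipotent_vecCons_one_zero (t : ℝ) : unipotent ![1, 0] t = upper t := by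
  ext i j; fin_cases i <;> fin_cases j <;> simp [unipotent, nilpotent, upper]

theorem mul_nilpotent_mul_adjugate (A : Matrix (Fin 2) (Fin 2) ℝ) (v : Fin 2 → ℝ) :
    A * nilpotent v * adjugate A = nilpotent (A *ᵥ v) := by
  ext i j
  fin_cases i <;> fin_cases j <;>
    simp [nilpotent, adjugate_fin_two, mul_apply, Fin.sum_univ_two, mulVec, dotProduct] <;> ring

theorem mul_unipotent_mul_inv (g : SL(2, ℝ)) (v : Fin 2 → ℝ) (t : ℝ) :
    g * unipotent v t * g⁻¹ = unipotent (g *ᵥ v) t := by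
  have h : (g : Matrix (Fin 2) (Fin 2) ℝ) * (1 + t • nilpotent v) * adjugate g =
      1 + t • nilpotent (g *ᵥ v) := by
    rw [mul_add, add_mul, mul_one, mul_adjugate, g.2, one_smul, mul_smul_comm, smul_mul_assoc,
      mul_nilpotent_mul_adjugate]
  exact Subtype.ext h

theorem upper_mul_lower_mul_diagExp_mul_upper (s : ℝ) {ε : ℝ} (hε : ε ≠ 0) :
    upper ((1 - exp s) / ε) * (lower (ε * exp (-s)) * diagExp s) * upper ((1 - exp (-s)) / ε) =
      lower ε := by
  refine Subtype.ext (?_ : !![1, (1 - exp s) / ε; 0, 1] * (!![1, 0; ε * exp (-s), 1] *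
    !![exp s, 0; 0, exp (-s)]) * !![1, (1 - exp (-s)) / ε; 0, 1] = !![1, 0; ε, 1])
  ext i j
  fin_cases i <;> fin_cases j <;> simp [mul_apply, Fin.sum_univ_two, exp_neg] <;> field_simp <;>
    ring

theorem diagExp_mul_lower_mul_inv (s t : ℝ) :
    diagExp s * lower t * (diagExp s)⁻¹ = lower (exp (-s) ^ 2 * t) := by
  refine Subtype.ext (?_ : !![exp s, 0; 0, exp (-s)] * !![1, 0; t, 1] *
    adjugate !![exp s, 0; 0, exp (-s)] = !![1, 0; exp (-s) ^ 2 * t, 1])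
  rw [adjugate_fin_two_of]
  ext i j
  fin_cases i <;> fin_cases j <;> simp [mul_apply, Fin.sum_univ_two, exp_neg]
  field_simp

theorem upper_mul_lower_mul_upper (g : SL(2, ℝ)) (hg : g 1 0 ≠ 0) :
    upper ((g 0 0 - 1) / g 1 0) * lower (g 1 0) * upper ((g 1 1 - 1) / g 1 0) = g := by
  have hdet : g 0 0 * g 1 1 - g 0 1 * g 1 0 = 1 := by rw [← det_fin_two]; exact g.2
  refine Subtype.ext (?_ : !![1, (g 0 0 - 1) / g 1 0; 0, 1] * !![1, 0; g 1 0, 1] *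
    !![1, (g 1 1 - 1) / g 1 0; 0, 1] = g)
  ext i j
  fin_cases i <;> fin_cases j <;> simp [mul_apply, Fin.sum_univ_two] <;> field_simp <;>
    linarith

theorem closure_range_upper_union_range_lower :
    Subgroup.closure (Set.range upper ∪ Set.range lower) = ⊤ := by
  set H := Subgroup.closure (Set.range upper ∪ Set.range lower)
  have hU : ∀ t, upper t ∈ H := fun t => Subgroup.subset_closure (Or.inl ⟨t, rfl⟩)
  have hL : ∀ t, lower t ∈ H := fun t => Subgroup.subset_closure (Or.inr ⟨t, rfl⟩)
  have hmem : ∀ g : SL(2, ℝ), g 1 0 ≠ 0 → g ∈ H := fun g hg =>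
    upper_mul_lower_mul_upper g hg ▸ H.mul_mem (H.mul_mem (hU _) (hL _)) (hU _)
  refine eq_top_iff.2 fun g _ => ?_
  by_cases hg : g 1 0 = 0
  · have hdet : g 0 0 * g 1 1 - g 0 1 * g 1 0 = 1 := by rw [← det_fin_two]; exact g.2
    have hg' : (lower 1 * g) 1 0 ≠ 0 := by
      have h00 : g 0 0 ≠ 0 := by rintro h; simp [h, hg] at hdet
      show ((!![1, 0; 1, 1] : Matrix (Fin 2) (Fin 2) ℝ) * g) 1 0 ≠ 0
      simpa [mul_apply, Fin.sum_univ_two, hg] using h00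
    exact (H.mul_mem_cancel_left (hL 1)).1 (hmem _ hg')
  · exact hmem g hg

theorem exists_mulVec_eq {v : Fin 2 → ℝ} (hv : v ≠ 0) : ∃ C : SL(2, ℝ), C *ᵥ ![1, 0] = v := by
  have hκ : v 0 ^ 2 + v 1 ^ 2 ≠ 0 := by
    contrapose! hv
    ext i
    fin_cases i <;> simp <;> nlinarith [sq_nonneg (v 0), sq_nonneg (v 1)]
  refine ⟨⟨!![v 0, -v 1 / (v 0 ^ 2 + v 1 ^ 2); v 1, v 0 / (v 0 ^ 2 + v 1 ^ 2)], ?_⟩, ?_⟩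
  · rw [det_fin_two_of]
    field_simp
    ring
  · ext i
    fin_cases i <;> simp [mulVec, dotProduct]

section Stabilizer

variable {X : Type*} [MetricSpace X] [MulAction SL(2, ℝ) X] [ContinuousSMul SL(2, ℝ) X]
  [IsIsometricSMul SL(2, ℝ) X] {x : X}

theorem diagExp_mem_stabilizer (hU : ∀ t, upper t ∈ stabilizer SL(2, ℝ) x) (s : ℝ) :
    diagExp s ∈ stabilizer SL(2, ℝ) x := by
  have hlower : Tendsto lower (𝓝[≠] 0) (𝓝 1) :=
    lower_zero ▸ (continuous_lower.tendsto 0).mono_left nhdsWithin_le_nhds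
  refine mem_stabilizer_of_tendsto (g := fun ε => lower (ε * exp (-s)) * diagExp s)
    (a := fun ε => upper ((1 - exp s) / ε)) (b := fun ε => upper ((1 - exp (-s)) / ε))
    (fun _ => hU _) (fun _ => hU _) ?_ (hlower.congr' ?_)
  · have hcont : Continuous fun ε : ℝ => lower (ε * exp (-s)) * diagExp s :=
      (continuous_lower.comp (continuous_mul_const _)).mul continuous_const
    simpa [lower_zero] using (hcont.tendsto 0).mono_left nhdsWithin_le_nhds
  · exact eventually_nhdsWithin_of_forall fun ε hε =>
      (upper_mul_lower_mul_diagExp_mul_upper s hε).symm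

theorem lower_mem_stabilizer (hD : ∀ s, diagExp s ∈ stabilizer SL(2, ℝ) x) (t : ℝ) :
    lower t ∈ stabilizer SL(2, ℝ) x := by
  refine mem_stabilizer_of_tendsto (l := atTop) (g := fun _ => lower t) (a := diagExp)
    (b := fun s => (diagExp s)⁻¹) hD (fun s => inv_mem (hD s)) tendsto_const_nhds ?_
  simp only [diagExp_mul_lower_mul_inv]
  have hexp : Tendsto (fun s => exp (-s) ^ 2 * t) atTop (𝓝 0) := by
    simpa using (tendsto_exp_neg_atTop_nhds_zero.pow 2).mul_const t
  exact (lower_zero ▸ continuous_lower.tendsto 0).comp hexp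

theorem stabilizer_eq_top_of_upper_mem (hU : ∀ t, upper t ∈ stabilizer SL(2, ℝ) x) :
    stabilizer SL(2, ℝ) x = ⊤ := by
  rw [eq_top_iff, ← closure_range_upper_union_range_lower, Subgroup.closure_le]
  rintro _ (⟨t, rfl⟩ | ⟨t, rfl⟩)
  · exact hU t
  · exact lower_mem_stabilizer (diagExp_mem_stabilizer hU) t

theorem unipotent_mem_stabilizer_of_tendsto {ι : Type*} {l : Filter ι} [l.NeBot]
    {h : ι → SL(2, ℝ)} {r : ι → ℝ} {P : Matrix (Fin 2) (Fin 2) ℝ}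
    (hh : ∀ i, h i ∈ stabilizer SL(2, ℝ) x) (hr : Tendsto r l (𝓝 0))
    (hP : Tendsto (fun i => r i • (h i : Matrix (Fin 2) (Fin 2) ℝ)) l (𝓝 P))
    (v : Fin 2 → ℝ) (t : ℝ) : unipotent (P *ᵥ v) t ∈ stabilizer SL(2, ℝ) x := by
  have hconj : ∀ i, unipotent ((r i • (h i : Matrix (Fin 2) (Fin 2) ℝ)) *ᵥ v) t =
      h i * unipotent (r i • v) t * (h i)⁻¹ := fun i => by
    rw [mul_unipotent_mul_inv, smul_mulVec, mulVec_smul]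
  have hg : Tendsto (fun i => unipotent ((r i • (h i : Matrix (Fin 2) (Fin 2) ℝ)) *ᵥ v) t) l
      (𝓝 (unipotent (P *ᵥ v) t)) := by
    have hPv : Tendsto (fun i => ((r i • (h i : Matrix (Fin 2) (Fin 2) ℝ)) *ᵥ v, t)) l
        (𝓝 (P *ᵥ v, t)) :=
      (((continuous_id.matrix_mulVec continuous_const).tendsto P).comp hP).prodMk_nhds
        tendsto_const_nhds
    exact (continuous_unipotent.tendsto _).comp hPv
  have hagb : Tendsto (fun i => (h i)⁻¹ *
      unipotent ((r i • (h i : Matrix (Fin 2) (Fin 2) ℝ)) *ᵥ v) t * h i) l (𝓝 1) := by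
    simp only [hconj, mul_assoc, inv_mul_cancel, mul_one, inv_mul_cancel_left]
    have hrv : Tendsto (fun i => (r i • v, t)) l (𝓝 (0, t)) := by
      simpa using (hr.smul_const v).prodMk_nhds tendsto_const_nhds
    simpa [Function.comp_def, unipotent_zero_left] using
      (continuous_unipotent.tendsto (0, t)).comp hrv
  exact mem_stabilizer_of_tendsto (fun i => inv_mem (hh i)) hh hg hagb

section MatrixNorm

attribute [local instance] Matrix.normedAddCommGroup Matrix.normedSpace

theorem exists_unipotent_mem_stabilizer
    (hx : ¬IsCompact (stabilizer SL(2, ℝ) x : Set SL(2, ℝ))) :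
    ∃ v ≠ 0, ∀ t, unipotent v t ∈ stabilizer SL(2, ℝ) x := by
  have hclosed : IsClosed ((↑) '' (stabilizer SL(2, ℝ) x : Set SL(2, ℝ)) :
      Set (Matrix (Fin 2) (Fin 2) ℝ)) :=
    SpecialLinearGroup.isClosedEmbedding_val.isClosedMap _
      (isClosed_eq (continuous_id.smul continuous_const : Continuous fun g : SL(2, ℝ) => g • x)
        continuous_const)
  have hunbdd : ¬Bornology.IsBounded ((↑) '' (stabilizer SL(2, ℝ) x : Set SL(2, ℝ)) :
      Set (Matrix (Fin 2) (Fin 2) ℝ)) := fun hb =>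
    hx (SpecialLinearGroup.isClosedEmbedding_val.isInducing.isCompact_iff.2
      (Metric.isCompact_of_isClosed_isBounded hclosed hb))
  obtain ⟨y, r, P, hy, hr, hP, hP0⟩ := exists_tendsto_smul_ne_zero_of_not_isBounded hunbdd
  choose h hh hhy using hy
  obtain rfl : y = fun n => (h n : Matrix (Fin 2) (Fin 2) ℝ) := funext fun n => (hhy n).symm
  obtain ⟨v, hv⟩ : ∃ v, P *ᵥ v ≠ 0 := by
    by_contra! hzero
    exact hP0 (ext_iff_mulVec.2 fun v => by simp [hzero v])
  exact ⟨P *ᵥ v, hv, unipotent_mem_stabilizer_of_tendsto hh hr hP v⟩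

end MatrixNorm

theorem stabilizer_eq_top_of_unipotent_mem {v : Fin 2 → ℝ} (hv : v ≠ 0)
    (hU : ∀ t, unipotent v t ∈ stabilizer SL(2, ℝ) x) : stabilizer SL(2, ℝ) x = ⊤ := by
  obtain ⟨C, rfl⟩ := exists_mulVec_eq hv
  have hy : stabilizer SL(2, ℝ) (C⁻¹ • x) = ⊤ := by
    refine stabilizer_eq_top_of_upper_mem fun t => mem_stabilizer_iff.2 ?_
    have hconj : (C * upper t * C⁻¹) • x = x := by
      rw [← unipotent_vecCons_one_zero, mul_unipotent_mul_inv]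
      exact hU t
    calc upper t • C⁻¹ • x = C⁻¹ • (C * upper t * C⁻¹) • x := by simp [mul_smul]
      _ = C⁻¹ • x := by rw [hconj]
  refine eq_top_iff.2 fun g _ => mem_stabilizer_iff.2 ?_
  have hfix : (C⁻¹ * g * C) • C⁻¹ • x = C⁻¹ • x :=
    mem_stabilizer_iff.1 (hy ▸ Subgroup.mem_top _)
  calc g • x = C • (C⁻¹ * g * C) • C⁻¹ • x := by simp [mul_smul]
    _ = x := by rw [hfix, smul_inv_smul]

end Stabilizer

end SL2Real

open SL2Real in
/-- **toy case.** If `SL₂(ℝ)` acts continuously by isometries on a metric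
space `X`, then every point `x₀` is either a global fixed point or has compact
stabilizer. -/
theorem statement6 {X : Type*} [MetricSpace X]
    [MulAction (Matrix.SpecialLinearGroup (Fin 2) ℝ) X]
    (hiso : ∀ (g : Matrix.SpecialLinearGroup (Fin 2) ℝ) (x y : X),
      dist (g • x) (g • y) = dist x y)
    (hcont : Continuous fun p : Matrix.SpecialLinearGroup (Fin 2) ℝ × X => p.1 • p.2)
    (x₀ : X) :
    (∀ g : Matrix.SpecialLinearGroup (Fin 2) ℝ, g • x₀ = x₀) ∨
    IsCompact {g : Matrix.SpecialLinearGroup (Fin 2) ℝ | g • x₀ = x₀} := by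
  have : ContinuousSMul SL(2, ℝ) X := ⟨hcont⟩
  have : IsIsometricSMul SL(2, ℝ) X := ⟨fun g => Isometry.of_dist_eq (hiso g)⟩
  refine or_iff_not_imp_right.2 fun hx g => ?_
  obtain ⟨v, hv, hU⟩ := exists_unipotent_mem_stabilizer hx
  exact mem_stabilizer_iff.1 (stabilizer_eq_top_of_unipotent_mem hv hU ▸ Subgroup.mem_top g)
end

section
/- Let G be a group acting equicontinuously on a uniform space (X, S), and let T be an S-compatible topology on X. Let (α) be a directed preorder, (x_α) a net in X converging to x in the uniform topology T_S, and (g_α) a net in G. Then for every y ∈ X, the net (g_α · x_α) converges to y in the topology T if and only if the net (g_α · x) converges to y in the topology T. -/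
/-!
By equicontinuity, `x_α → x` makes `g_α • x_α` and `g_α • x` uniformly asymptotic whatever
the `g_α` are, and an `S`-compatible topology cannot tell uniformly asymptotic nets apart.
-/

open Filter Topology Uniformity

section

variable {X ι : Type*} [UniformSpace X] {l : Filter ι} {a b : ι → X}

theorem SCompatible.tendsto_of_tendsto_uniformity {T : TopologicalSpace X}
    (hcompat : SCompatible ‹UniformSpace X› T)
    (hab : Tendsto (fun i => (a i, b i)) l (𝓤 X)) {y : X}
    (hb : Tendsto b l (@nhds X T y)) : Tendsto a l (@nhds X T y) := by
  rw [@tendsto_nhds X T] at hb ⊢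
  intro V hV hyV
  obtain ⟨V', hV', hyV', W, hW, hWV⟩ := hcompat V hV y hyV
  filter_upwards [hb V' hV' hyV', hab hW] with i hbi habi
  exact hWV ⟨b i, hbi, habi⟩

theorem EquicontinuousSMul.tendsto_smul_uniformity {G : Type*} [SMul G X]
    (hequi : EquicontinuousSMul G ‹UniformSpace X›)
    (hab : Tendsto (fun i => (a i, b i)) l (𝓤 X)) (g : ι → G) :
    Tendsto (fun i => (g i • a i, g i • b i)) l (𝓤 X) :=
  fun W hW => (hab.eventually_mem (hequi W hW)).mono fun i hi => hi (g i)

end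

theorem statement14_general {G X : Type*} [Group G] [MulAction G X]
    (U : UniformSpace X) (T : TopologicalSpace X)
    (hcompat : SCompatible U T)
    (hequi : EquicontinuousSMul G U)
    {D : Type*} [Preorder D]
    (x_ : D → X) (x : X)
    (hx : Filter.Tendsto x_ Filter.atTop (@nhds X U.toTopologicalSpace x))
    (g_ : D → G) (y : X) :
    Filter.Tendsto (fun α => g_ α • x_ α) Filter.atTop (@nhds X T y) ↔
    Filter.Tendsto (fun α => g_ α • x) Filter.atTop (@nhds X T y) := by
  let _ := U
  have hleft : Tendsto (fun α => (x, x_ α)) atTop (𝓤 X) := Uniform.tendsto_nhds_right.mp hx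
  have hright : Tendsto (fun α => (x_ α, x)) atTop (𝓤 X) := Uniform.tendsto_nhds_left.mp hx
  exact ⟨hcompat.tendsto_of_tendsto_uniformity (hequi.tendsto_smul_uniformity hleft g_),
    hcompat.tendsto_of_tendsto_uniformity (hequi.tendsto_smul_uniformity hright g_)⟩

/-- For an equicontinuous action on `(X, S)` with an `S`-compatible
topology `T`: if a net `x_α → x` in `T_S` and `g_α` is any net in `G`, then
`g_α • x_α → y` in `T` iff `g_α • x → y` in `T`. -/
theorem statement14 {G X : Type*} [Group G] [MulAction G X]
    (U : UniformSpace X) (T : TopologicalSpace X)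
    (hcompat : SCompatible U T)
    (hequi : EquicontinuousSMul G U)
    {D : Type*} [Preorder D] [Nonempty D] [IsDirected D (· ≤ ·)]
    (x_ : D → X) (x : X)
    (hx : Filter.Tendsto x_ Filter.atTop (@nhds X U.toTopologicalSpace x))
    (g_ : D → G) (y : X) :
    Filter.Tendsto (fun α => g_ α • x_ α) Filter.atTop (@nhds X T y) ↔
    Filter.Tendsto (fun α => g_ α • x) Filter.atTop (@nhds X T y) :=
  statement14_general U T hcompat hequi x_ x hx g_ y
end
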